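/- arXiv:2004.09395 — 3 statements merged into one kernel-verified Lean document; each statement's English description precedes it below -/
import Mathlib

section
/- If ρ: S × A → ℝ is a strictly positive occupancy measure of some policy on a finite MDP, then ρ is the occupancy measure of the policy π_ρ(a|s) := ρ(s,a) / Σ_{a'} ρ(s,a'), and π_ρ is the unique policy whose occupancy measure is ρ. -/
open scoped BigOperators

variable {S A : Type*} [Fintype S] [Fintype A]

/-- State distribution at time `t` of the Markov chain induced by policy `π`. -/
noncomputable def stateDist (π : S → A → ℝ) (ρ0 : S → ℝ) (P : S → A → S → ℝ) :
    ℕ → S → ℝ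
  | 0, s => ρ0 s
  | t + 1, s' => ∑ s : S, ∑ a : A, stateDist π ρ0 P t s * π s a * P s a s'

/-- The occupancy measure ρ_π(s,a) = Σ_t γ^t P(s_t = s, a_t = a | π). -/
noncomputable def occ (γ : ℝ) (π : S → A → ℝ) (ρ0 : S → ℝ) (P : S → A → S → ℝ)
    (s : S) (a : A) : ℝ :=
  ∑' t : ℕ, γ ^ t * (stateDist π ρ0 P t s * π s a)

/-- A Markov policy: nonnegative and normalized over actions at each state. -/
def IsPolicy (π : S → A → ℝ) : Prop :=
  (∀ s a, 0 ≤ π s a) ∧ ∀ s, ∑ a, π s a = 1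

/-- The policy induced by an occupancy measure: π_ρ(a|s) = ρ(s,a) / Σ_{a'} ρ(s,a'). -/
noncomputable def polOf (ρ : S → A → ℝ) (s : S) (a : A) : ℝ :=
  ρ s a / ∑ a', ρ s a'

/-- Theorem 2 of Syed et al. (2008): a strictly positive occupancy measure `ρ` of
some policy is the occupancy measure of `π_ρ`, and `π_ρ` is the unique policy whose
occupancy measure is `ρ`. -/
theorem occupancy_policy_unique
    (γ : ℝ) (hγ0 : 0 ≤ γ) (hγ1 : γ < 1)
    (ρ0 : S → ℝ) (hρ00 : ∀ s, 0 ≤ ρ0 s) (hρ01 : ∑ s, ρ0 s = 1)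
    (P : S → A → S → ℝ) (hP0 : ∀ s a s', 0 ≤ P s a s')
    (hP1 : ∀ s a, ∑ s', P s a s' = 1)
    (ρ : S → A → ℝ) (hpos : ∀ s a, 0 < ρ s a)
    (hρ : ∃ π, IsPolicy π ∧ ∀ s a, occ γ π ρ0 P s a = ρ s a) :
    (∀ s a, occ γ (polOf ρ) ρ0 P s a = ρ s a) ∧
      ∀ π, IsPolicy π → (∀ s a, occ γ π ρ0 P s a = ρ s a) → π = polOf ρ := by
  have key : ∀ π, IsPolicy π → (∀ s a, occ γ π ρ0 P s a = ρ s a) → π = polOf ρ := by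
    intro π hπ h
    funext s a
    set D := ∑' t : ℕ, γ ^ t * stateDist π ρ0 P t s with hD
    have hocc : ∀ a', occ γ π ρ0 P s a' = D * π s a' := by
      intro a'
      rw [occ, hD, ← tsum_mul_right]
      congr 1; funext t; ring
    have hsum : ∑ a', ρ s a' = D := by
      rw [Finset.sum_congr rfl fun a' _ => by rw [← h s a', hocc a']]
      rw [← Finset.mul_sum, hπ.2, mul_one]
    have hDpos : 0 < D := by
      rw [← hsum]; exact Finset.sum_pos (fun a' _ => hpos s a') ⟨a, Finset.mem_univ a⟩
    have hρa : ρ s a = D * π s a := by rw [← h s a, hocc]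
    rw [polOf, hsum, hρa]
    field_simp
  obtain ⟨π₀, hπ₀, hocc₀⟩ := hρ
  have heq := key π₀ hπ₀ hocc₀
  exact ⟨heq ▸ hocc₀, key⟩
end

section
/- Fix a reward r: S×A → ℝ on a finite MDP and γ ∈ [0,1). A policy π maximizes the MaxEnt RL objective Σ_{s,a} ρ_π(s,a) r(s,a) + H̄(ρ_π) over all policies if and only if its occupancy measure ρ_π minimizes KL((1-γ)ρ_π ‖ q) over valid occupancy measures, where q(s,a) = exp(r(s,a))/Z with Z = Σ_{s,a} exp(r(s,a)). -/
open scoped BigOperators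

variable {S A : Type*} [Fintype S] [Fintype A]

/-- The normalized occupancy measure `ρ̂_π = (1−γ) ρ_π`. -/
noncomputable def nocc (γ : ℝ) (π : S → A → ℝ) (ρ0 : S → ℝ) (P : S → A → S → ℝ) :
    S → A → ℝ :=
  fun s a => (1 - γ) * occ γ π ρ0 P s a

/-- KL divergence between measures on `S × A`. -/
noncomputable def klSA (ρ₁ ρ₂ : S → A → ℝ) : ℝ :=
  ∑ s, ∑ a, ρ₁ s a * Real.log (ρ₁ s a / ρ₂ s a)

/-- Joint entropy of a measure on `S × A`. -/
noncomputable def Hjoint (ρ : S → A → ℝ) : ℝ :=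
  -∑ s, ∑ a, ρ s a * Real.log (ρ s a)

lemma stateDist_nonneg (π : S → A → ℝ) (ρ0 : S → ℝ) (P : S → A → S → ℝ)
    (hρ0 : ∀ s, 0 ≤ ρ0 s) (hπ : ∀ s a, 0 ≤ π s a) (hP : ∀ s a s', 0 ≤ P s a s') :
    ∀ t s, 0 ≤ stateDist π ρ0 P t s := by
  intro t
  induction t with
  | zero => intro s; exact hρ0 s
  | succ t ih =>
    intro s'
    exact Finset.sum_nonneg fun s _ => Finset.sum_nonneg fun a _ =>
      mul_nonneg (mul_nonneg (ih s) (hπ s a)) (hP s a s')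

lemma stateDist_sum (π : S → A → ℝ) (ρ0 : S → ℝ) (P : S → A → S → ℝ)
    (hρ01 : ∑ s, ρ0 s = 1) (hπ : ∀ s, ∑ a, π s a = 1)
    (hP1 : ∀ s a, ∑ s', P s a s' = 1) :
    ∀ t, ∑ s, stateDist π ρ0 P t s = 1 := by
  intro t
  induction t with
  | zero => simpa [stateDist] using hρ01
  | succ t ih =>
    have : ∑ s', ∑ s : S, ∑ a : A, stateDist π ρ0 P t s * π s a * P s a s'
        = ∑ s : S, ∑ a : A, ∑ s', stateDist π ρ0 P t s * π s a * P s a s' := by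
      rw [Finset.sum_comm]
      exact Finset.sum_congr rfl fun s _ => Finset.sum_comm
    simp only [stateDist, this, ← Finset.mul_sum, hP1, mul_one, hπ]
    simpa using ih

lemma occ_summable (γ : ℝ) (hγ0 : 0 ≤ γ) (hγ1 : γ < 1)
    (π : S → A → ℝ) (ρ0 : S → ℝ) (P : S → A → S → ℝ)
    (hρ00 : ∀ s, 0 ≤ ρ0 s) (hρ01 : ∑ s, ρ0 s = 1)
    (hP0 : ∀ s a s', 0 ≤ P s a s') (hP1 : ∀ s a, ∑ s', P s a s' = 1)
    (hπ : IsPolicy π) (s : S) (a : A) :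
    Summable (fun t => γ ^ t * (stateDist π ρ0 P t s * π s a)) := by
  apply Summable.of_nonneg_of_le
  · intro t
    exact mul_nonneg (pow_nonneg hγ0 t)
      (mul_nonneg (stateDist_nonneg π ρ0 P hρ00 hπ.1 hP0 t s) (hπ.1 s a))
  · intro t
    have hd1 : stateDist π ρ0 P t s ≤ 1 := by
      rw [← stateDist_sum π ρ0 P hρ01 hπ.2 hP1 t]
      exact Finset.single_le_sum
        (fun s' _ => stateDist_nonneg π ρ0 P hρ00 hπ.1 hP0 t s') (Finset.mem_univ s)
    have hπ1 : π s a ≤ 1 := by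
      rw [← hπ.2 s]
      exact Finset.single_le_sum (fun a' _ => hπ.1 s a') (Finset.mem_univ a)
    calc γ ^ t * (stateDist π ρ0 P t s * π s a) ≤ γ ^ t * 1 := by
          apply mul_le_mul_of_nonneg_left _ (pow_nonneg hγ0 t)
          calc stateDist π ρ0 P t s * π s a ≤ 1 * 1 :=
              mul_le_mul hd1 hπ1 (hπ.1 s a) zero_le_one
            _ = 1 := one_mul 1
      _ = γ ^ t := mul_one _
  · exact summable_geometric_of_lt_one hγ0 hγ1

lemma nocc_sum (γ : ℝ) (hγ0 : 0 ≤ γ) (hγ1 : γ < 1)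
    (π : S → A → ℝ) (ρ0 : S → ℝ) (P : S → A → S → ℝ)
    (hρ00 : ∀ s, 0 ≤ ρ0 s) (hρ01 : ∑ s, ρ0 s = 1)
    (hP0 : ∀ s a s', 0 ≤ P s a s') (hP1 : ∀ s a, ∑ s', P s a s' = 1)
    (hπ : IsPolicy π) :
    ∑ s, ∑ a, nocc γ π ρ0 P s a = 1 := by
  have key : ∑ s, ∑ a, occ γ π ρ0 P s a = (1 - γ)⁻¹ := by
    have h1 : ∑ s, ∑ a, occ γ π ρ0 P s a
        = ∑ p : S × A, occ γ π ρ0 P p.1 p.2 := by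
      rw [Fintype.sum_prod_type]
    rw [h1]
    have h2 : ∀ p : S × A, p ∈ Finset.univ →
        Summable (fun t => γ ^ t * (stateDist π ρ0 P t p.1 * π p.1 p.2)) :=
      fun p _ => occ_summable γ hγ0 hγ1 π ρ0 P hρ00 hρ01 hP0 hP1 hπ p.1 p.2
    have h3 : ∑ p : S × A, occ γ π ρ0 P p.1 p.2
        = ∑' t : ℕ, ∑ p : S × A, γ ^ t * (stateDist π ρ0 P t p.1 * π p.1 p.2) :=
      (Summable.tsum_finsetSum h2).symm
    rw [h3]
    have h4 : ∀ t : ℕ, ∑ p : S × A, γ ^ t * (stateDist π ρ0 P t p.1 * π p.1 p.2)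
        = γ ^ t := by
      intro t
      rw [Fintype.sum_prod_type]
      simp only [← Finset.mul_sum, hπ.2]
      simp [stateDist_sum π ρ0 P hρ01 hπ.2 hP1 t]
    simp only [h4]
    exact tsum_geometric_of_lt_one hγ0 hγ1
  simp only [nocc, ← Finset.mul_sum, key]
  exact mul_inv_cancel₀ (sub_ne_zero.mpr hγ1.ne')

/-- A policy maximizes the MaxEnt RL objective (expected reward under the
normalized occupancy measure plus its joint entropy) iff its normalized
occupancy measure minimizes `KL(· ‖ q)` over valid occupancy measures, where
`q(s,a) = exp(r(s,a))/Z` is the Boltzmann distribution induced by `r`. -/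
theorem maxent_rl_iff_kl_min
    (γ : ℝ) (hγ0 : 0 ≤ γ) (hγ1 : γ < 1)
    (ρ0 : S → ℝ) (hρ00 : ∀ s, 0 ≤ ρ0 s) (hρ01 : ∑ s, ρ0 s = 1)
    (P : S → A → S → ℝ) (hP0 : ∀ s a s', 0 ≤ P s a s')
    (hP1 : ∀ s a, ∑ s', P s a s' = 1)
    (r : S → A → ℝ) (π : S → A → ℝ) (hπ : IsPolicy π) :
    ((∀ π', IsPolicy π' →
        (∑ s, ∑ a, nocc γ π' ρ0 P s a * r s a) + Hjoint (nocc γ π' ρ0 P)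
          ≤ (∑ s, ∑ a, nocc γ π ρ0 P s a * r s a) + Hjoint (nocc γ π ρ0 P))
      ↔ (∀ π', IsPolicy π' →
          klSA (nocc γ π ρ0 P)
              (fun s a => Real.exp (r s a) / ∑ s', ∑ a', Real.exp (r s' a'))
            ≤ klSA (nocc γ π' ρ0 P)
              (fun s a => Real.exp (r s a) / ∑ s', ∑ a', Real.exp (r s' a')))) := by
  by_cases hS : Nonempty S
  case neg =>
    have hSe : IsEmpty S := not_nonempty_iff.mp hS
    constructor <;> intro _ π' hπ' <;> simp [klSA, Hjoint, nocc, Finset.univ_eq_empty]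
  case pos =>
    by_cases hA : Nonempty A
    case neg =>
      exfalso
      have hAe : IsEmpty A := not_nonempty_iff.mp hA
      obtain ⟨s⟩ := hS
      have := hπ.2 s
      simp [Finset.univ_eq_empty] at this
    case pos =>
      set Z : ℝ := ∑ s', ∑ a', Real.exp (r s' a') with hZ
      haveI := hS; haveI := hA
      have hZpos : 0 < Z := by
        apply Finset.sum_pos
        · intro s _
          exact Finset.sum_pos (fun a _ => Real.exp_pos _) Finset.univ_nonempty
        · exact Finset.univ_nonempty
      -- key identity
      have key : ∀ π', IsPolicy π' →
          klSA (nocc γ π' ρ0 P) (fun s a => Real.exp (r s a) / Z)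
            = Real.log Z
              - ((∑ s, ∑ a, nocc γ π' ρ0 P s a * r s a) + Hjoint (nocc γ π' ρ0 P)) := by
        intro π' hπ'
        have hsum := nocc_sum γ hγ0 hγ1 π' ρ0 P hρ00 hρ01 hP0 hP1 hπ'
        set ρ := nocc γ π' ρ0 P with hρ
        have pointwise : ∀ s a, ρ s a * Real.log (ρ s a / (Real.exp (r s a) / Z))
            = ρ s a * Real.log (ρ s a) - ρ s a * r s a + ρ s a * Real.log Z := by
          intro s a
          by_cases h0 : ρ s a = 0
          · simp [h0]
          · have hq : Real.exp (r s a) / Z ≠ 0 :=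
              div_ne_zero (Real.exp_ne_zero _) (ne_of_gt hZpos)
            rw [Real.log_div h0 hq, Real.log_div (Real.exp_ne_zero _) (ne_of_gt hZpos),
              Real.log_exp]
            ring
        have : klSA ρ (fun s a => Real.exp (r s a) / Z)
            = (∑ s, ∑ a, ρ s a * Real.log (ρ s a))
              - (∑ s, ∑ a, ρ s a * r s a)
              + Real.log Z * (∑ s, ∑ a, ρ s a) := by
          simp only [klSA, pointwise]
          rw [Finset.mul_sum]
          rw [← Finset.sum_sub_distrib, ← Finset.sum_add_distrib]
          apply Finset.sum_congr rfl
          intro s _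
          rw [Finset.mul_sum, ← Finset.sum_sub_distrib, ← Finset.sum_add_distrib]
          apply Finset.sum_congr rfl
          intro a _
          ring
        rw [this, hsum, Hjoint]
        ring
      constructor
      · intro h π' hπ'
        rw [key π hπ, key π' hπ']
        exact sub_le_sub_left (h π' hπ') _
      · intro h π' hπ'
        have := h π' hπ'
        rw [key π hπ, key π' hπ'] at this
        linarith
end

section
/- Under the trajectory model of Proposition 3, minimizing KL(p ‖ p_E) over policies π is equivalent to maximizing Σ_{t=0}^T E_p[r(s_t,a_t)] + Σ_{t=0}^T E_p[−log π(a_t|s_t)], i.e., finite-horizon maximum-entropy RL with reward r. -/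
open scoped BigOperators

variable {S A : Type*} [Fintype S] [Fintype A]

/-- Probability of a length-(T+1) trajectory under policy `π`. -/
noncomputable def pTraj (T : ℕ) (ρ0 : S → ℝ) (P : S → A → S → ℝ)
    (π : S → A → ℝ) (τ : Fin (T + 1) → S × A) : ℝ :=
  ρ0 (τ 0).1 * (∏ t : Fin (T + 1), π (τ t).1 (τ t).2) *
    ∏ t : Fin T, P (τ t.castSucc).1 (τ t.castSucc).2 (τ t.succ).1

/-- The expert trajectory distribution `p_E ∝ (dynamics) · exp(Σ_t r)`. -/
noncomputable def pETraj (T : ℕ) (ρ0 : S → ℝ) (P : S → A → S → ℝ)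
    (r : S → A → ℝ) (Z : ℝ) (τ : Fin (T + 1) → S × A) : ℝ :=
  (1 / Z) * ρ0 (τ 0).1 *
    (∏ t : Fin T, P (τ t.castSucc).1 (τ t.castSucc).2 (τ t.succ).1) *
    Real.exp (∑ t : Fin (T + 1), r (τ t).1 (τ t).2)

set_option linter.unusedVariables false
set_option linter.unusedSectionVars false

lemma pTraj_snoc (T : ℕ) (ρ0 : S → ℝ) (P : S → A → S → ℝ) (π : S → A → ℝ)
    (τ' : Fin (T + 1) → S × A) (x : S × A) :
    pTraj (T + 1) ρ0 P π (Fin.snoc τ' x) =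
      pTraj T ρ0 P π τ' *
        (π x.1 x.2 * P (τ' (Fin.last T)).1 (τ' (Fin.last T)).2 x.1) := by
  have h0 : (Fin.snoc τ' x : Fin (T + 2) → S × A) 0 = τ' 0 := by
    rw [show (0 : Fin (T + 2)) = Fin.castSucc 0 by simp, Fin.snoc_castSucc]
  have hπprod : (∏ t : Fin (T + 2),
        π ((Fin.snoc τ' x : Fin (T + 2) → S × A) t).1 ((Fin.snoc τ' x : Fin (T + 2) → S × A) t).2)
      = (∏ t : Fin (T + 1), π (τ' t).1 (τ' t).2) * π x.1 x.2 := by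
    rw [Fin.prod_univ_castSucc]
    simp [Fin.snoc_castSucc, Fin.snoc_last]
  have hPprod : (∏ t : Fin (T + 1),
        P ((Fin.snoc τ' x : Fin (T + 2) → S × A) t.castSucc).1
          ((Fin.snoc τ' x : Fin (T + 2) → S × A) t.castSucc).2
          ((Fin.snoc τ' x : Fin (T + 2) → S × A) t.succ).1)
      = (∏ t : Fin T, P (τ' t.castSucc).1 (τ' t.castSucc).2 (τ' t.succ).1) *
          P (τ' (Fin.last T)).1 (τ' (Fin.last T)).2 x.1 := by
    rw [Fin.prod_univ_castSucc]
    simp [-Fin.castSucc_succ, Fin.snoc_castSucc, Fin.snoc_last, Fin.succ_castSucc, Fin.succ_last]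
  unfold pTraj
  rw [hπprod, hPprod, h0]
  ring

lemma pTraj_sum_one (T : ℕ) (ρ0 : S → ℝ) (P : S → A → S → ℝ) (π : S → A → ℝ)
    (hρ01 : ∑ s, ρ0 s = 1) (hP1 : ∀ s a, ∑ s', P s a s' = 1)
    (hπ1 : ∀ s, ∑ a, π s a = 1) :
    ∑ τ : Fin (T + 1) → S × A, pTraj T ρ0 P π τ = 1 := by
  induction T with
  | zero =>
      rw [Fintype.sum_equiv (Equiv.funUnique (Fin 1) (S × A))
        (fun τ => pTraj 0 ρ0 P π τ) (fun x => ρ0 x.1 * π x.1 x.2)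
        (fun τ => by simp [pTraj])]
      rw [Fintype.sum_prod_type]
      simp_rw [← Finset.mul_sum, hπ1, mul_one, hρ01]
  | succ T ih =>
      rw [← Fintype.sum_equiv (Fin.snocEquiv (fun _ => S × A))
        (fun p => pTraj (T + 1) ρ0 P π (Fin.snoc p.2 p.1))
        (fun τ => pTraj (T + 1) ρ0 P π τ) (fun p => rfl)]
      rw [Fintype.sum_prod_type_right]
      have key : ∀ τ' : Fin (T + 1) → S × A,
          ∑ x : S × A, pTraj (T + 1) ρ0 P π (Fin.snoc τ' x) = pTraj T ρ0 P π τ' := by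
        intro τ'
        simp_rw [pTraj_snoc]
        rw [← Finset.mul_sum, Fintype.sum_prod_type]
        simp_rw [← Finset.sum_mul, hπ1, one_mul, hP1, mul_one]
      calc ∑ τ' : Fin (T + 1) → S × A, ∑ x : S × A, pTraj (T + 1) ρ0 P π (Fin.snoc τ' x)
          = ∑ τ' : Fin (T + 1) → S × A, pTraj T ρ0 P π τ' :=
            Finset.sum_congr rfl fun τ' _ => key τ'
        _ = 1 := ih

lemma kl_eq_logZ_sub (T : ℕ) (ρ0 : S → ℝ) (P : S → A → S → ℝ) (r : S → A → ℝ) (Z : ℝ)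
    (hρ0pos : ∀ s, 0 < ρ0 s) (hρ01 : ∑ s, ρ0 s = 1)
    (hPpos : ∀ s a s', 0 < P s a s') (hP1 : ∀ s a, ∑ s', P s a s' = 1)
    (hZpos : 0 < Z)
    (π : S → A → ℝ) (hπpos : ∀ s a, 0 < π s a) (hπ1 : ∀ s, ∑ a, π s a = 1)
    (hsum1 : ∑ τ : Fin (T + 1) → S × A, pTraj T ρ0 P π τ = 1) :
    (∑ τ : Fin (T + 1) → S × A,
        pTraj T ρ0 P π τ * Real.log (pTraj T ρ0 P π τ / pETraj T ρ0 P r Z τ))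
      = Real.log Z -
        ((∑ t : Fin (T + 1), ∑ τ : Fin (T + 1) → S × A,
            pTraj T ρ0 P π τ * r (τ t).1 (τ t).2)
          + (∑ t : Fin (T + 1), ∑ τ : Fin (T + 1) → S × A,
              pTraj T ρ0 P π τ * (-Real.log (π (τ t).1 (τ t).2)))) := by
  have hlog : ∀ τ : Fin (T + 1) → S × A,
      Real.log (pTraj T ρ0 P π τ / pETraj T ρ0 P r Z τ)
        = Real.log Z + (∑ t : Fin (T + 1), Real.log (π (τ t).1 (τ t).2))
            - ∑ t : Fin (T + 1), r (τ t).1 (τ t).2 := by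
    intro τ
    have hprodπ : 0 < ∏ t : Fin (T + 1), π (τ t).1 (τ t).2 :=
      Finset.prod_pos fun t _ => hπpos _ _
    have hratio : pTraj T ρ0 P π τ / pETraj T ρ0 P r Z τ
        = Z * (∏ t : Fin (T + 1), π (τ t).1 (τ t).2) /
            Real.exp (∑ t : Fin (T + 1), r (τ t).1 (τ t).2) := by
      unfold pTraj pETraj
      have h1 : ρ0 (τ 0).1 ≠ 0 := (hρ0pos _).ne'
      have h2 : (∏ t : Fin T, P (τ t.castSucc).1 (τ t.castSucc).2 (τ t.succ).1) ≠ 0 :=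
        (Finset.prod_pos fun t _ => hPpos _ _ _).ne'
      have h3 : Real.exp (∑ t : Fin (T + 1), r (τ t).1 (τ t).2) ≠ 0 := Real.exp_ne_zero _
      field_simp
    rw [hratio, Real.log_div (by positivity) (Real.exp_ne_zero _),
      Real.log_mul hZpos.ne' hprodπ.ne', Real.log_prod fun t _ => (hπpos _ _).ne',
      Real.log_exp]
  calc (∑ τ : Fin (T + 1) → S × A,
        pTraj T ρ0 P π τ * Real.log (pTraj T ρ0 P π τ / pETraj T ρ0 P r Z τ))
      = ∑ τ : Fin (T + 1) → S × A, (pTraj T ρ0 P π τ * Real.log Z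
          + ∑ t : Fin (T + 1), pTraj T ρ0 P π τ * Real.log (π (τ t).1 (τ t).2)
          - ∑ t : Fin (T + 1), pTraj T ρ0 P π τ * r (τ t).1 (τ t).2) := by
        refine Finset.sum_congr rfl fun τ _ => ?_
        rw [hlog τ]
        rw [← Finset.mul_sum, ← Finset.mul_sum]
        ring
    _ = (∑ τ : Fin (T + 1) → S × A, pTraj T ρ0 P π τ) * Real.log Z
          + (∑ τ : Fin (T + 1) → S × A, ∑ t : Fin (T + 1),
              pTraj T ρ0 P π τ * Real.log (π (τ t).1 (τ t).2))
          - ∑ τ : Fin (T + 1) → S × A, ∑ t : Fin (T + 1),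
              pTraj T ρ0 P π τ * r (τ t).1 (τ t).2 := by
        rw [Finset.sum_sub_distrib, Finset.sum_add_distrib, ← Finset.sum_mul]
    _ = Real.log Z -
        ((∑ t : Fin (T + 1), ∑ τ : Fin (T + 1) → S × A,
            pTraj T ρ0 P π τ * r (τ t).1 (τ t).2)
          + (∑ t : Fin (T + 1), ∑ τ : Fin (T + 1) → S × A,
              pTraj T ρ0 P π τ * (-Real.log (π (τ t).1 (τ t).2)))) := by
        rw [hsum1, one_mul, Finset.sum_comm, Finset.sum_comm
          (γ := Fin (T + 1) → S × A) (f := fun τ t => pTraj T ρ0 P π τ * r (τ t).1 (τ t).2)]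
        simp_rw [mul_neg, Finset.sum_neg_distrib]
        ring

/-- Minimizing `KL(p ‖ p_E)` over policies is equivalent to maximizing the
finite-horizon maximum-entropy RL objective
`Σ_t E_p[r(s_t,a_t)] + Σ_t E_p[−log π(a_t|s_t)]`. -/
theorem trajectory_kl_maxent_equiv
    (T : ℕ) (ρ0 : S → ℝ) (P : S → A → S → ℝ) (r : S → A → ℝ) (Z : ℝ)
    (hρ0pos : ∀ s, 0 < ρ0 s) (hρ01 : ∑ s, ρ0 s = 1)
    (hPpos : ∀ s a s', 0 < P s a s') (hP1 : ∀ s a, ∑ s', P s a s' = 1)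
    (hZ : Z = ∑ τ : Fin (T + 1) → S × A,
      ρ0 (τ 0).1 * (∏ t : Fin T, P (τ t.castSucc).1 (τ t.castSucc).2 (τ t.succ).1) *
        Real.exp (∑ t : Fin (T + 1), r (τ t).1 (τ t).2)) :
    ∀ π₁ π₂ : S → A → ℝ,
      (∀ s a, 0 < π₁ s a) → (∀ s, ∑ a, π₁ s a = 1) →
      (∀ s a, 0 < π₂ s a) → (∀ s, ∑ a, π₂ s a = 1) →
      ((∑ τ : Fin (T + 1) → S × A,
          pTraj T ρ0 P π₁ τ * Real.log (pTraj T ρ0 P π₁ τ / pETraj T ρ0 P r Z τ))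
        ≤ (∑ τ : Fin (T + 1) → S × A,
            pTraj T ρ0 P π₂ τ * Real.log (pTraj T ρ0 P π₂ τ / pETraj T ρ0 P r Z τ))
       ↔ ((∑ t : Fin (T + 1), ∑ τ : Fin (T + 1) → S × A,
              pTraj T ρ0 P π₂ τ * r (τ t).1 (τ t).2)
            + (∑ t : Fin (T + 1), ∑ τ : Fin (T + 1) → S × A,
                pTraj T ρ0 P π₂ τ * (-Real.log (π₂ (τ t).1 (τ t).2)))
          ≤ (∑ t : Fin (T + 1), ∑ τ : Fin (T + 1) → S × A,
                pTraj T ρ0 P π₁ τ * r (τ t).1 (τ t).2)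
              + (∑ t : Fin (T + 1), ∑ τ : Fin (T + 1) → S × A,
                  pTraj T ρ0 P π₁ τ * (-Real.log (π₁ (τ t).1 (τ t).2))))) := by
  intro p1 p2 h1pos h1n h2pos h2n
  have hS : Nonempty S := by
    by_contra h
    rw [not_nonempty_iff] at h
    simp at hρ01
  have hA : Nonempty A := by
    by_contra h
    rw [not_nonempty_iff] at h
    have := h1n (Classical.arbitrary S)
    simp at this
  have hZpos : 0 < Z := by
    rw [hZ]
    refine Finset.sum_pos (fun τ _ => ?_) Finset.univ_nonempty
    exact mul_pos (mul_pos (hρ0pos _) (Finset.prod_pos fun t _ => hPpos _ _ _))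
      (Real.exp_pos _)
  have e1 := kl_eq_logZ_sub T ρ0 P r Z hρ0pos hρ01 hPpos hP1 hZpos p1 h1pos h1n
    (pTraj_sum_one T ρ0 P p1 hρ01 hP1 h1n)
  have e2 := kl_eq_logZ_sub T ρ0 P r Z hρ0pos hρ01 hPpos hP1 hZpos p2 h2pos h2n
    (pTraj_sum_one T ρ0 P p2 hρ01 hP1 h2n)
  rw [e1, e2]
  constructor <;> intro h <;> linarith
end
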